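/- arXiv:math/0311199 — 7 statements merged into one kernel-verified Lean document; each statement's English description precedes it below -/
import Mathlib

section
/- In any bialgebra $H$, for $\sigma \in S_n$, $\tau \in S_m$ and $h \in H$, the Sweedler powers satisfy the power law $(h^{\sigma})^{\tau} = h^{\sigma\cdot\tau}$, where $\sigma\cdot\tau \in S_{mn}$ is defined by $(\sigma\cdot\tau)((i-1)n+j) = (\sigma(j)-1)m+\tau(i)$. -/
open PiTensorProduct
open scoped TensorProduct

/-- The canonical identification `H ⊗ H^{⊗n} ≃ H^{⊗(n+1)}`. -/
noncomputable def tensorSucc (R H : Type*) [CommSemiring R] [Semiring H]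
    [Module R H] (n : ℕ) :
    (H ⊗[R] (⨂[R] (_i : Fin n), H)) ≃ₗ[R] ⨂[R] (_i : Fin (n + 1)), H :=
  (TensorProduct.congr
      ((PiTensorProduct.subsingletonEquiv (0 : Fin 1) :
          (⨂[R] (_i : Fin 1), H) ≃ₗ[R] H)).symm (LinearEquiv.refl R _)).trans
    ((PiTensorProduct.tmulEquiv R H).trans
      (((PiTensorProduct.reindex R (fun _ : Fin 1 ⊕ Fin n => H)
            finSumFinEquiv).trans
        (PiTensorProduct.reindex R (fun _ : Fin (1 + n) => H)
            (finCongr (Nat.add_comm 1 n))))))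

section Test
variable (R M : Type*) [CommSemiring R] [Semiring M] [Module R M]

theorem tensorSucc_tprod (n : ℕ) (x : M) (v : Fin n → M) :
    tensorSucc R M n (x ⊗ₜ[R] PiTensorProduct.tprod R v) = PiTensorProduct.tprod R (Fin.cons x v) := by
  have h1 : ((PiTensorProduct.subsingletonEquiv (0 : Fin 1) :
      (⨂[R] (_ : Fin 1), M) ≃ₗ[R] M)).symm x = PiTensorProduct.tprod R (fun _ : Fin 1 => x) := by
    rw [LinearEquiv.symm_apply_eq, subsingletonEquiv_apply_tprod]
  simp only [tensorSucc, LinearEquiv.trans_apply, TensorProduct.congr_tmul,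
    LinearEquiv.refl_apply, h1, tmulEquiv_apply, reindex_tprod]
  simp only [finCongr_symm, finCongr_apply]
  congr 1
  funext k
  induction k using Fin.cases with
  | zero =>
      rw [show Fin.cast (Nat.add_comm 1 n).symm (0 : Fin (n+1)) = Fin.castAdd n (0 : Fin 1) from
        Fin.ext (by simp)]
      simp
  | succ i =>
      rw [show Fin.cast (Nat.add_comm 1 n).symm i.succ = Fin.natAdd 1 i from
        Fin.ext (by simp [Nat.add_comm])]
      simp
end Test

section Cat
variable (R M : Type*) [CommSemiring R] [AddCommMonoid M] [Module R M]

/-- Concatenation `H^{⊗a} ⊗ H^{⊗b} ≃ H^{⊗(a+b)}`. -/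
noncomputable def catL (a b : ℕ) :
    ((⨂[R] (_ : Fin a), M) ⊗[R] (⨂[R] (_ : Fin b), M)) ≃ₗ[R] (⨂[R] (_ : Fin (a+b)), M) :=
  (PiTensorProduct.tmulEquiv R M).trans
    (PiTensorProduct.reindex R (fun _ : Fin a ⊕ Fin b => M) finSumFinEquiv)

variable {R M}

theorem catL_tprod {a b : ℕ} (u : Fin a → M) (v : Fin b → M) :
    catL R M a b (PiTensorProduct.tprod R u ⊗ₜ[R] PiTensorProduct.tprod R v) = PiTensorProduct.tprod R (Fin.append u v) := by
  simp only [catL, LinearEquiv.trans_apply, tmulEquiv_apply, reindex_tprod]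
  congr 1
  funext k
  induction k using Fin.addCases with
  | left i => simp [Fin.append_left]
  | right j => simp [Fin.append_right]

theorem catL_symm_tprod {a b : ℕ} (d : Fin (a+b) → M) :
    (catL R M a b).symm (PiTensorProduct.tprod R d)
      = PiTensorProduct.tprod R (fun i : Fin a => d (Fin.castAdd b i)) ⊗ₜ[R]
        PiTensorProduct.tprod R (fun j : Fin b => d (Fin.natAdd a j)) := by
  rw [LinearEquiv.symm_apply_eq, catL_tprod]
  congr 1
  funext k
  induction k using Fin.addCases with
  | left i => simp [Fin.append_left]
  | right j => simp [Fin.append_right]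

theorem reindex_cast_tprod {N N' : ℕ} (h : N = N') (c : Fin N → M) :
    PiTensorProduct.reindex R (fun _ : Fin N => M) (finCongr h) (PiTensorProduct.tprod R c)
      = PiTensorProduct.tprod R (fun k : Fin N' => c (Fin.cast h.symm k)) := by
  rw [reindex_tprod]; rfl

/-- `(K)`: interaction of `catL` and `tensorSucc`. -/
theorem catL_tensorSucc {M : Type*} [Semiring M] [Module R M] (a b : ℕ) (x : M)
    (s : ⨂[R] (_ : Fin a), M) (t : ⨂[R] (_ : Fin b), M) :
    PiTensorProduct.reindex R (fun _ : Fin (a+b+1) => M) (finCongr (Nat.succ_add a b).symm)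
        (tensorSucc R M (a+b) (x ⊗ₜ[R] catL R M a b (s ⊗ₜ[R] t)))
      = catL R M (a+1) b ((tensorSucc R M a (x ⊗ₜ[R] s)) ⊗ₜ[R] t) := by
  induction s using PiTensorProduct.induction_on with
  | smul_tprod r u =>
    induction t using PiTensorProduct.induction_on with
    | smul_tprod r' v =>
      simp only [TensorProduct.smul_tmul, TensorProduct.tmul_smul, map_smul, smul_smul]
      rw [catL_tprod, tensorSucc_tprod, tensorSucc_tprod, catL_tprod, reindex_cast_tprod,
        Fin.append_cons]
      rfl
    | add y z hy hz =>
      simp only [TensorProduct.tmul_add, map_add, TensorProduct.add_tmul, hy, hz]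
  | add y z hy hz =>
    simp only [TensorProduct.tmul_add, TensorProduct.add_tmul, map_add, hy, hz]
end Cat

/-- The iterated comultiplication `Δⁿ : H → H^{⊗n}`,
`h ↦ h₍₁₎ ⊗ h₍₂₎ ⊗ ⋯ ⊗ h₍ₙ₎`. -/
noncomputable def deltaIter (R H : Type*) [CommSemiring R] [Semiring H]
    [Bialgebra R H] : (n : ℕ) → (H →ₗ[R] ⨂[R] (_i : Fin n), H)
  | 0 => (PiTensorProduct.isEmptyEquiv (Fin 0)).symm.toLinearMap ∘ₗ
      Coalgebra.counit
  | n + 1 => (tensorSucc R H n).toLinearMap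
      ∘ₗ (LinearMap.lTensor H (deltaIter R H n))
      ∘ₗ Coalgebra.comul

section Bial
variable {R H : Type*} [CommSemiring R] [Semiring H] [Bialgebra R H]

theorem deltaIter_zero_apply (h : H) :
    deltaIter R H 0 h = Coalgebra.counit (R := R) h • PiTensorProduct.tprod R isEmptyElim := by
  show (PiTensorProduct.isEmptyEquiv (Fin 0)).symm (Coalgebra.counit h) = _
  rw [isEmptyEquiv_symm_apply]

theorem deltaIter_succ_apply (n : ℕ) (h : H) :
    deltaIter R H (n+1) h
      = tensorSucc R H n ((LinearMap.lTensor H (deltaIter R H n)) (Coalgebra.comul h)) := rfl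

theorem deltaIter_cast {N N' : ℕ} (hN : N = N') (h : H) :
    deltaIter R H N' h
      = PiTensorProduct.reindex R (fun _ : Fin N => H) (finCongr hN) (deltaIter R H N h) := by
  subst hN
  rw [finCongr_refl, reindex_refl]
  rfl

theorem catL_empty_left {M : Type*} [AddCommMonoid M] [Module R M] (b : ℕ)
    (w : ⨂[R] (_ : Fin b), M) :
    catL R M 0 b (PiTensorProduct.tprod R isEmptyElim ⊗ₜ[R] w)
      = PiTensorProduct.reindex R (fun _ : Fin b => M) (finCongr (Nat.zero_add b).symm) w := by
  induction w using PiTensorProduct.induction_on with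
  | smul_tprod r v =>
    rw [TensorProduct.tmul_smul, map_smul, map_smul, catL_tprod, reindex_cast_tprod]
    refine congrArg _ (congrArg _ (funext fun k => ?_))
    induction k using Fin.addCases with
    | left i => exact i.elim0
    | right j =>
      rw [Fin.append_right]
      congr 1
      apply Fin.ext
      simp
  | add y z hy hz => rw [TensorProduct.tmul_add, map_add, map_add, hy, hz]

/-- structural step lemma -/
theorem step_structural (a b : ℕ) :
    (PiTensorProduct.reindex R (fun _ : Fin (a+b+1) => H) (finCongr (Nat.succ_add a b).symm)).toLinearMap
      ∘ₗ (tensorSucc R H (a+b)).toLinearMap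
      ∘ₗ (LinearMap.lTensor H ((catL R H a b).toLinearMap
            ∘ₗ TensorProduct.map (deltaIter R H a) (deltaIter R H b)))
      ∘ₗ (TensorProduct.assoc R H H H).toLinearMap
    = (catL R H (a+1) b).toLinearMap
      ∘ₗ TensorProduct.map ((tensorSucc R H a).toLinearMap ∘ₗ LinearMap.lTensor H (deltaIter R H a))
          (deltaIter R H b) := by
  apply TensorProduct.ext'
  intro u z
  induction u using TensorProduct.induction_on with
  | zero => simp only [TensorProduct.zero_tmul, map_zero]
  | tmul x y =>
    simp only [LinearMap.comp_apply, LinearEquiv.coe_coe, TensorProduct.assoc_tmul,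
      LinearMap.lTensor_tmul, TensorProduct.map_tmul, LinearMap.id_apply]
    exact catL_tensorSucc a b x (deltaIter R H a y) (deltaIter R H b z)
  | add y z hy hz =>
    simp only [TensorProduct.add_tmul, map_add] at hy hz ⊢
    rw [hy, hz]

/-- Generalized coassociativity. -/
theorem deltaIter_add (a b : ℕ) :
    deltaIter R H (a+b)
      = (catL R H a b).toLinearMap
        ∘ₗ TensorProduct.map (deltaIter R H a) (deltaIter R H b)
        ∘ₗ (Coalgebra.comul (R := R)) := by
  induction a with
  | zero =>
    apply LinearMap.ext; intro h
    simp only [LinearMap.comp_apply, LinearEquiv.coe_coe]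
    have key : (TensorProduct.map (deltaIter R H 0) (deltaIter R H b)) (Coalgebra.comul h)
        = PiTensorProduct.tprod R isEmptyElim ⊗ₜ[R] deltaIter R H b h := by
      rw [show deltaIter R H 0 = (PiTensorProduct.isEmptyEquiv (Fin 0)).symm.toLinearMap
            ∘ₗ (Coalgebra.counit (R := R)) from rfl,
          ← LinearMap.comp_id (deltaIter R H b), TensorProduct.map_comp, LinearMap.comp_apply,
          show (TensorProduct.map (Coalgebra.counit (R := R) (A := H))
              (LinearMap.id (M := H))) = LinearMap.rTensor H (Coalgebra.counit (R := R) (A := H))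
            from rfl,
          Coalgebra.rTensor_counit_comul, TensorProduct.map_tmul]
      simp only [LinearMap.comp_apply, LinearEquiv.coe_coe, LinearMap.id_apply,
        isEmptyEquiv_symm_apply, one_smul]
    rw [key, catL_empty_left, ← deltaIter_cast]
  | succ a IH =>
    apply LinearMap.ext; intro h
    simp only [LinearMap.comp_apply, LinearEquiv.coe_coe]
    rw [deltaIter_cast ((Nat.succ_add a b).symm) h, deltaIter_succ_apply, IH,
      LinearMap.lTensor_comp, LinearMap.lTensor_comp, LinearMap.comp_apply,
      LinearMap.comp_apply, ← Coalgebra.coassoc_apply h]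
    have hs := LinearMap.congr_fun (step_structural a b)
      ((LinearMap.rTensor H (Coalgebra.comul (R := R))) (Coalgebra.comul h))
    simp only [LinearMap.comp_apply, LinearEquiv.coe_coe, LinearMap.lTensor_comp] at hs
    rw [hs]
    have hmap : TensorProduct.map
          ((tensorSucc R H a).toLinearMap ∘ₗ LinearMap.lTensor H (deltaIter R H a))
          (deltaIter R H b) ∘ₗ LinearMap.rTensor H (Coalgebra.comul (R := R))
        = TensorProduct.map (deltaIter R H (a+1)) (deltaIter R H b) := by
      rw [show LinearMap.rTensor H (Coalgebra.comul (R := R) (A := H))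
          = TensorProduct.map (Coalgebra.comul (R := R) (A := H)) (LinearMap.id (M := H))
          from rfl, ← TensorProduct.map_comp]
      rfl
    rw [← LinearMap.comp_apply, hmap]
end Bial

section Mult
variable {R H : Type*} [CommSemiring R] [Semiring H] [Bialgebra R H]

theorem fin_cons_mul {n : ℕ} (x y : H) (u v : Fin n → H) :
    (Fin.cons (x * y) (u * v) : Fin (n+1) → H) = Fin.cons x u * Fin.cons y v := by
  funext k
  induction k using Fin.cases with
  | zero => simp
  | succ i => simp

theorem tensorSucc_mul (n : ℕ) (u v : H ⊗[R] (⨂[R] (_ : Fin n), H)) :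
    tensorSucc R H n (u * v) = tensorSucc R H n u * tensorSucc R H n v := by
  induction u using TensorProduct.induction_on with
  | zero => rw [zero_mul, (tensorSucc R H n).map_zero, zero_mul]
  | add u₁ u₂ h1 h2 => simp only [add_mul, map_add, h1, h2]
  | tmul x s =>
    induction v using TensorProduct.induction_on with
    | zero => rw [mul_zero, (tensorSucc R H n).map_zero, mul_zero]
    | add v₁ v₂ h1 h2 => simp only [mul_add, map_add, h1, h2]
    | tmul y t =>
      rw [Algebra.TensorProduct.tmul_mul_tmul]
      induction s using PiTensorProduct.induction_on with
      | add s₁ s₂ h1 h2 =>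
        simp only [mul_add, add_mul, TensorProduct.tmul_add, TensorProduct.add_tmul,
          map_add, h1, h2]
      | smul_tprod r f =>
        induction t using PiTensorProduct.induction_on with
        | add t₁ t₂ h1 h2 =>
          simp only [mul_add, add_mul, TensorProduct.tmul_add, TensorProduct.add_tmul,
            map_add, h1, h2]
        | smul_tprod r' g =>
          simp only [smul_mul_smul_comm, TensorProduct.tmul_smul, map_smul,
            PiTensorProduct.tprod_mul_tprod]
          rw [tensorSucc_tprod, tensorSucc_tprod, tensorSucc_tprod, fin_cons_mul,
            ← PiTensorProduct.tprod_mul_tprod]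

theorem lTensor_mul_of {P : Type*} [Semiring P] [Algebra R P] (f : H →ₗ[R] P)
    (hmul : ∀ a b : H, f (a * b) = f a * f b) (u v : H ⊗[R] H) :
    LinearMap.lTensor H f (u * v) = LinearMap.lTensor H f u * LinearMap.lTensor H f v := by
  induction u using TensorProduct.induction_on with
  | zero => simp only [zero_mul, map_zero]
  | add u₁ u₂ h1 h2 => simp only [add_mul, map_add, h1, h2]
  | tmul x s =>
    induction v using TensorProduct.induction_on with
    | zero => simp only [mul_zero, map_zero]
    | add v₁ v₂ h1 h2 => simp only [mul_add, map_add, h1, h2]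
    | tmul y t =>
      rw [Algebra.TensorProduct.tmul_mul_tmul, LinearMap.lTensor_tmul, LinearMap.lTensor_tmul,
        LinearMap.lTensor_tmul, Algebra.TensorProduct.tmul_mul_tmul, hmul]

theorem deltaIter_one : ∀ m : ℕ, deltaIter R H m 1 = 1
  | 0 => by
    rw [deltaIter_zero_apply, Bialgebra.counit_one, one_smul, PiTensorProduct.one_def]
    exact congrArg _ (funext fun k => k.elim0)
  | m + 1 => by
    rw [deltaIter_succ_apply, Bialgebra.comul_one, Algebra.TensorProduct.one_def,
      LinearMap.lTensor_tmul, deltaIter_one m, PiTensorProduct.one_def, tensorSucc_tprod,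
      PiTensorProduct.one_def]
    refine congrArg _ (funext fun k => ?_)
    induction k using Fin.cases with
    | zero => simp
    | succ i => simp

theorem deltaIter_mul : ∀ (m : ℕ) (a b : H),
    deltaIter R H m (a * b) = deltaIter R H m a * deltaIter R H m b
  | 0, a, b => by
    rw [deltaIter_zero_apply, deltaIter_zero_apply, deltaIter_zero_apply,
      Bialgebra.counit_mul, smul_mul_smul_comm, PiTensorProduct.tprod_mul_tprod]
    exact congrArg _ (congrArg _ (funext fun k => k.elim0))
  | m + 1, a, b => by
    rw [deltaIter_succ_apply, deltaIter_succ_apply, deltaIter_succ_apply,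
      Bialgebra.comul_mul, lTensor_mul_of _ (deltaIter_mul m), tensorSucc_mul]

theorem deltaIter_list_prod (m : ℕ) (l : List H) :
    deltaIter R H m l.prod = (l.map (deltaIter R H m)).prod := by
  induction l with
  | nil => simpa using deltaIter_one m
  | cons x l ih => rw [List.prod_cons, List.map_cons, List.prod_cons, deltaIter_mul, ih]
end Mult

section MapStuff
variable {R : Type*} [CommSemiring R]

theorem map_tensorSucc_tmul {M P : Type*} [Semiring M] [Module R M]
    [Semiring P] [Module R P] (n : ℕ) (f : M →ₗ[R] P) (x : M)
    (w : ⨂[R] (_ : Fin n), M) :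
    PiTensorProduct.map (fun _ : Fin (n+1) => f) (tensorSucc R M n (x ⊗ₜ[R] w))
      = tensorSucc R P n (f x ⊗ₜ[R] PiTensorProduct.map (fun _ : Fin n => f) w) := by
  induction w using PiTensorProduct.induction_on with
  | smul_tprod r g =>
      rw [TensorProduct.tmul_smul, (tensorSucc R M n).map_smul, map_smul, map_smul,
        TensorProduct.tmul_smul, (tensorSucc R P n).map_smul, tensorSucc_tprod,
        PiTensorProduct.map_tprod, PiTensorProduct.map_tprod, tensorSucc_tprod]
      exact congrArg _ (congrArg _ (Fin.comp_cons f x g))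
  | add y z hy hz => simp only [TensorProduct.tmul_add, map_add, hy, hz]

theorem map_comp_tensorSucc {M P : Type*} [Semiring M] [Module R M]
    [Semiring P] [Module R P] (n : ℕ) (f : M →ₗ[R] P) :
    (PiTensorProduct.map (fun _ : Fin (n+1) => f)) ∘ₗ (tensorSucc R M n).toLinearMap
      = (tensorSucc R P n).toLinearMap
        ∘ₗ TensorProduct.map f (PiTensorProduct.map (fun _ : Fin n => f)) :=
  TensorProduct.ext' fun x w => map_tensorSucc_tmul n f x w

/-- Flattening `H^{⊗ mn} → (H^{⊗m})^{⊗n}`. -/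
noncomputable def flatL (R M : Type*) [CommSemiring R] [Semiring M] [Algebra R M] :
    (n m : ℕ) → ((⨂[R] (_ : Fin (m*n)), M) →ₗ[R] ⨂[R] (_ : Fin n), (⨂[R] (_ : Fin m), M))
  | 0, m => (PiTensorProduct.isEmptyEquiv (Fin 0)).symm.toLinearMap ∘ₗ
      (PiTensorProduct.isEmptyEquiv (Fin 0)).toLinearMap
  | n+1, m =>
      (tensorSucc R (⨂[R] (_ : Fin m), M) n).toLinearMap
      ∘ₗ (LinearMap.lTensor _ (flatL R M n m))
      ∘ₗ (catL R M m (m*n)).symm.toLinearMap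
      ∘ₗ (PiTensorProduct.reindex R (fun _ : Fin (m*n+m) => M)
            (finCongr (Nat.add_comm (m*n) m))).toLinearMap
end MapStuff

section C2
variable {R H : Type*} [CommSemiring R] [Semiring H] [Bialgebra R H]

theorem deltaIter_lift (m n : ℕ) (x : ⨂[R] (_ : Fin n), H) :
    deltaIter R H m (PiTensorProduct.lift (MultilinearMap.mkPiAlgebraFin R n H) x)
      = PiTensorProduct.lift (MultilinearMap.mkPiAlgebraFin R n (⨂[R] (_ : Fin m), H))
          (PiTensorProduct.map (fun _ => deltaIter R H m) x) := by
  induction x using PiTensorProduct.induction_on with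
  | smul_tprod r f =>
      simp only [map_smul, lift.tprod, PiTensorProduct.map_tprod,
        MultilinearMap.mkPiAlgebraFin_apply]
      rw [deltaIter_list_prod, List.map_ofFn]
      rfl
  | add y z hy hz => simp only [map_add, hy, hz]

theorem deltaIter_flat (n m : ℕ) :
    (PiTensorProduct.map (fun _ : Fin n => deltaIter R H m)) ∘ₗ deltaIter R H n
      = flatL R H n m ∘ₗ deltaIter R H (m*n) := by
  induction n with
  | zero =>
    apply LinearMap.ext; intro h
    simp only [LinearMap.comp_apply]
    show PiTensorProduct.map _ (deltaIter R H 0 h) = (flatL R H 0 m) (deltaIter R H 0 h)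
    rw [deltaIter_zero_apply, map_smul, map_smul, PiTensorProduct.map_tprod]
    refine congrArg _ ?_
    show (PiTensorProduct.tprod R fun i : Fin 0 => deltaIter R H m (isEmptyElim i))
        = (PiTensorProduct.isEmptyEquiv (Fin 0)).symm
            ((PiTensorProduct.isEmptyEquiv (Fin 0)) (PiTensorProduct.tprod R fun a : Fin 0 => (isEmptyElim a : H)))
    rw [isEmptyEquiv_apply_tprod, isEmptyEquiv_symm_apply, one_smul]
    exact congrArg _ (funext fun k => k.elim0)
  | succ n IH =>
    apply LinearMap.ext; intro h
    simp only [LinearMap.comp_apply]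
    rw [deltaIter_succ_apply]
    have hnat := LinearMap.congr_fun (map_comp_tensorSucc n (deltaIter R H m))
      ((LinearMap.lTensor H (deltaIter R H n)) (Coalgebra.comul h))
    simp only [LinearMap.comp_apply, LinearEquiv.coe_coe] at hnat
    rw [hnat]
    have hcomp : TensorProduct.map (deltaIter R H m)
          (PiTensorProduct.map (fun _ : Fin n => deltaIter R H m)) ∘ₗ
          LinearMap.lTensor H (deltaIter R H n)
        = TensorProduct.map (deltaIter R H m)
            ((PiTensorProduct.map (fun _ : Fin n => deltaIter R H m)) ∘ₗ deltaIter R H n) := by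
      rw [show LinearMap.lTensor H (deltaIter R H n)
          = TensorProduct.map (LinearMap.id (M := H)) (deltaIter R H n) from rfl,
        ← TensorProduct.map_comp, LinearMap.comp_id]
    rw [← LinearMap.comp_apply, hcomp, IH]
    show _ = (tensorSucc R (⨂[R] (_ : Fin m), H) n).toLinearMap
        ((LinearMap.lTensor _ (flatL R H n m))
          ((catL R H m (m*n)).symm.toLinearMap
            ((PiTensorProduct.reindex R (fun _ : Fin (m*n+m) => H)
              (finCongr (Nat.add_comm (m*n) m))).toLinearMap (deltaIter R H (m*n+m) h))))
    simp only [LinearMap.comp_apply, LinearEquiv.coe_coe]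
    rw [← deltaIter_cast (Nat.add_comm (m*n) m) h, deltaIter_add m (m*n)]
    simp only [LinearMap.comp_apply, LinearEquiv.coe_coe]
    rw [LinearEquiv.symm_apply_apply]
    have h2 : TensorProduct.map (deltaIter R H m) (flatL R H n m ∘ₗ deltaIter R H (m*n))
        = LinearMap.lTensor _ (flatL R H n m) ∘ₗ
          TensorProduct.map (deltaIter R H m) (deltaIter R H (m*n)) := by
      rw [show LinearMap.lTensor (⨂[R] (_ : Fin m), H) (flatL R H n m)
          = TensorProduct.map LinearMap.id (flatL R H n m) from rfl, ← TensorProduct.map_comp,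
        LinearMap.id_comp]
    rw [h2, LinearMap.comp_apply]
end C2

def fidx {m n : ℕ} (j : Fin n) (i : Fin m) : Fin (m*n) :=
  ⟨(j:ℕ)*m + i, by
    have h1 : (j:ℕ)*m + i < ((j:ℕ)+1)*m := by rw [Nat.succ_mul]; omega
    have h2 : ((j:ℕ)+1)*m ≤ n*m := Nat.mul_le_mul_right m j.isLt
    have h3 : n*m = m*n := Nat.mul_comm n m
    omega⟩

section Flat
variable {R M : Type*} [CommSemiring R] [Semiring M] [Algebra R M]

theorem flatL_tprod : ∀ (n : ℕ) {m : ℕ} (c : Fin (m*n) → M),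
    flatL R M n m (PiTensorProduct.tprod R c)
      = PiTensorProduct.tprod R (fun j : Fin n => PiTensorProduct.tprod R (fun i : Fin m => c (fidx j i)))
  | 0, m, c => by
    show (PiTensorProduct.isEmptyEquiv (Fin 0)).symm
        ((PiTensorProduct.isEmptyEquiv (Fin 0)) (PiTensorProduct.tprod R (fun k : Fin 0 => c k))) = _
    rw [isEmptyEquiv_apply_tprod, isEmptyEquiv_symm_apply, one_smul]
    exact congrArg _ (funext fun k => k.elim0)
  | n+1, m, c => by
    show (tensorSucc R (⨂[R] (_ : Fin m), M) n)
        ((LinearMap.lTensor _ (flatL R M n m))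
          ((catL R M m (m*n)).symm
            ((PiTensorProduct.reindex R (fun _ : Fin (m*n+m) => M)
              (finCongr (Nat.add_comm (m*n) m))) (PiTensorProduct.tprod R (fun k : Fin (m*n+m) => c k))))) = _
    rw [reindex_cast_tprod, catL_symm_tprod, LinearMap.lTensor_tmul, flatL_tprod n,
      tensorSucc_tprod]
    refine congrArg _ (funext fun j => ?_)
    induction j using Fin.cases with
    | zero =>
      rw [Fin.cons_zero]
      refine congrArg _ (funext fun i => congrArg c (Fin.ext ?_))
      show (i : ℕ) = (0:ℕ)*m + i
      omega
    | succ j' =>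
      rw [Fin.cons_succ]
      refine congrArg _ (funext fun i => congrArg c (Fin.ext ?_))
      show (m:ℕ) + ((j':ℕ)*m + i) = ((j'.succ : ℕ))*m + i
      rw [Fin.val_succ, Nat.succ_mul]
      omega
end Flat

/-- The `σ`-th Sweedler power `h ↦ h^σ = h₍σ(1)₎ h₍σ(2)₎ ⋯ h₍σ(n)₎` in a bialgebra. -/
noncomputable def sweedlerPow (R H : Type*) [CommSemiring R] [Semiring H]
    [Bialgebra R H] {n : ℕ} (σ : Equiv.Perm (Fin n)) : H →ₗ[R] H :=
  PiTensorProduct.lift (MultilinearMap.mkPiAlgebraFin R n H)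
    ∘ₗ (PiTensorProduct.reindex R (fun _ : Fin n => H)
          (Equiv.symm σ)).toLinearMap
    ∘ₗ deltaIter R H n

/-- The product `σ · τ ∈ S_{mn}` of `σ ∈ Sₙ` and `τ ∈ Sₘ`, determined (0-indexed) by
`(σ·τ)(i·n + j) = σ(j)·m + τ(i)`. -/
def permProd {n m : ℕ} (σ : Equiv.Perm (Fin n)) (τ : Equiv.Perm (Fin m)) :
    Equiv.Perm (Fin (m * n)) :=
  (finProdFinEquiv.symm.trans ((Equiv.prodComm (Fin m) (Fin n)).trans
    ((Equiv.prodCongr σ τ).trans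
      (finProdFinEquiv.trans (finCongr (Nat.mul_comm n m))))))

theorem permProd_apply {n m : ℕ} (σ : Equiv.Perm (Fin n)) (τ : Equiv.Perm (Fin m))
    (a : Fin m) (b : Fin n) :
    permProd σ τ (finProdFinEquiv (a, b)) = fidx (σ b) (τ a) := by
  simp only [permProd, Equiv.trans_apply, Equiv.symm_apply_apply, Equiv.prodComm_apply,
    Equiv.prodCongr_apply, Prod.swap_prod_mk, Prod.map_apply, finCongr_apply]
  apply Fin.ext
  simp only [Fin.coe_cast, finProdFinEquiv_apply_val, fidx]
  ring

section Prod
variable {R H : Type*} [CommSemiring R] [Semiring H] [Bialgebra R H]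

theorem prod_ofFn_tprod {k m : ℕ} (g : Fin k → Fin m → H) :
    (List.ofFn fun j => PiTensorProduct.tprod R (g j)).prod
      = PiTensorProduct.tprod R (fun i => (List.ofFn fun j => g j i).prod) := by
  induction k with
  | zero =>
    simp only [List.ofFn_zero, List.prod_nil, PiTensorProduct.one_def]
    rfl
  | succ k ih =>
    simp only [List.ofFn_succ, List.prod_cons, ih]
    rw [PiTensorProduct.tprod_mul_tprod]
    rfl
end Prod

section Final
variable {R H : Type*} [CommSemiring R] [Semiring H] [Bialgebra R H]

theorem fin_assembly (n m : ℕ) (σ : Equiv.Perm (Fin n)) (τ : Equiv.Perm (Fin m))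
    (x : ⨂[R] (_ : Fin (m*n)), H) :
    PiTensorProduct.lift (MultilinearMap.mkPiAlgebraFin R m H)
      (PiTensorProduct.reindex R (fun _ : Fin m => H) τ.symm
        (PiTensorProduct.lift (MultilinearMap.mkPiAlgebraFin R n (⨂[R] (_ : Fin m), H))
          (PiTensorProduct.reindex R (fun _ : Fin n => ⨂[R] (_ : Fin m), H) σ.symm
            (flatL R H n m x))))
    = PiTensorProduct.lift (MultilinearMap.mkPiAlgebraFin R (m*n) H)
        (PiTensorProduct.reindex R (fun _ : Fin (m*n) => H) (permProd σ τ).symm x) := by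
  induction x using PiTensorProduct.induction_on with
  | add y z hy hz => simp only [map_add, hy, hz]
  | smul_tprod r c =>
    simp only [map_smul]
    refine congrArg _ ?_
    rw [flatL_tprod, reindex_tprod, lift.tprod, MultilinearMap.mkPiAlgebraFin_apply]
    simp only [Equiv.symm_symm]
    rw [prod_ofFn_tprod (g := fun j i => c (fidx (σ j) i)), reindex_tprod]
    simp only [Equiv.symm_symm]
    rw [lift.tprod, MultilinearMap.mkPiAlgebraFin_apply, reindex_tprod]
    simp only [Equiv.symm_symm]
    rw [lift.tprod, MultilinearMap.mkPiAlgebraFin_apply,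
      List.ofFn_mul (fun k : Fin (m*n) => c (permProd σ τ k)), List.prod_flatten,
      List.map_ofFn]
    refine congrArg List.prod (congrArg List.ofFn (funext fun a => ?_))
    refine congrArg List.prod (congrArg List.ofFn (funext fun b => ?_))
    show c (fidx (σ b) (τ a)) = c (permProd σ τ ⟨(a:ℕ)*n + b, _⟩)
    rw [show (⟨(a:ℕ)*n + b, _⟩ : Fin (m*n)) = finProdFinEquiv (a, b) from
      Fin.ext (by simp only [finProdFinEquiv_apply_val]; ring), permProd_apply]
end Final

/-- The power law for Sweedler powers in a bialgebra: `(h^σ)^τ = h^{σ·τ}`. -/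
theorem sweedlerPow_sweedlerPow (R H : Type*) [CommSemiring R] [Semiring H]
    [Bialgebra R H] (n m : ℕ) (σ : Equiv.Perm (Fin n)) (τ : Equiv.Perm (Fin m))
    (h : H) :
    sweedlerPow R H τ (sweedlerPow R H σ h) = sweedlerPow R H (permProd σ τ) h := by

  simp only [sweedlerPow, LinearMap.comp_apply, LinearEquiv.coe_coe]
  rw [deltaIter_lift m n]
  have hmr := PiTensorProduct.map_reindex (R := R)
    (fun _ : Fin n => deltaIter R H m) σ.symm (deltaIter R H n h)
  rw [hmr]
  have hC2 := LinearMap.congr_fun (deltaIter_flat (R := R) (H := H) n m) h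
  simp only [LinearMap.comp_apply] at hC2
  rw [hC2]
  exact fin_assembly n m σ τ (deltaIter R H (m*n) h)
end

section
/- Let $M$ be the set of finite sequences of positive integers (including the empty sequence), with product $[n_1,\dots,n_k][m_1,\dots,m_l] = [m_1 n_1, m_1 n_2, \dots, m_1 n_k, m_1, m_2, \dots, m_l]$ and the empty sequence as unit. Then $M$ is a monoid, the set $M_N$ of normalized sequences (those where each entry divides its predecessor) is a submonoid, and the normalization map $M \to M_N$ is a monoid homomorphism. -/
/-- The product of finite sequences of positive integers:
`[n₁,…,n_k] · [m₁,…,m_l] = [m₁n₁, m₁n₂, …, m₁n_k, m₁, m₂, …, m_l]`,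
with the empty sequence as unit. -/
def seqMul (a b : List ℕ) : List ℕ :=
  match b with
  | [] => a
  | m₁ :: _ => a.map (m₁ * ·) ++ b

/-- A sequence is normalized if every entry divides its predecessor. -/
def SeqNormalized (a : List ℕ) : Prop :=
  List.Chain' (fun x y => y ∣ x) a

/-- Auxiliary recursion for normalization: `n'_{i+1} = gcd (n_{i+1}) (n'_i)`. -/
def seqNormalizeAux : ℕ → List ℕ → List ℕ
  | _, [] => []
  | p, x :: xs => Nat.gcd x p :: seqNormalizeAux (Nat.gcd x p) xs

/-- The normalization of a sequence: `n'₁ = n₁`, `n'_{i+1} = gcd (n_{i+1}) (n'_i)`. -/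
def seqNormalize : List ℕ → List ℕ
  | [] => []
  | x :: xs => x :: seqNormalizeAux x xs

lemma seqNormalizeAux_chain (p : ℕ) (xs : List ℕ) :
    List.Chain (fun x y => y ∣ x) p (seqNormalizeAux p xs) := by
  induction xs generalizing p with
  | nil => exact List.Chain.nil
  | cons x xs ih => exact List.Chain.cons (Nat.gcd_dvd_right x p) (ih _)

lemma seqNormalizeAux_id (p : ℕ) (xs : List ℕ)
    (h : List.Chain (fun x y => y ∣ x) p xs) : seqNormalizeAux p xs = xs := by
  induction xs generalizing p with
  | nil => rfl
  | cons x xs ih =>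
    obtain ⟨hd, hc⟩ := List.isChain_cons_cons.mp h
    simp [seqNormalizeAux, Nat.gcd_eq_left hd, ih x hc]

lemma seqNormalizeAux_hom (m : ℕ) (bs as : List ℕ) (p : ℕ) :
    seqNormalizeAux (m * p) (as.map (m * ·) ++ m :: bs)
      = (seqNormalizeAux p as).map (m * ·) ++ m :: seqNormalizeAux m bs := by
  induction as generalizing p with
  | nil => simp [seqNormalizeAux, Nat.gcd_eq_left (dvd_mul_right m p)]
  | cons x xs ih =>
    simp only [List.map_cons, List.cons_append, seqNormalizeAux, Nat.gcd_mul_left, List.append_eq, ih]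

/-- The set `M` of finite sequences of positive integers is a monoid under `seqMul` with
the empty sequence as unit, the normalized sequences form a submonoid, and normalization
is a monoid homomorphism `M → M_N`. -/
theorem seq_monoid :
    (∀ a b c : List ℕ, seqMul (seqMul a b) c = seqMul a (seqMul b c)) ∧
    (∀ a : List ℕ, seqMul a [] = a) ∧
    (∀ a : List ℕ, seqMul [] a = a) ∧
    (∀ a b : List ℕ, (∀ x ∈ a, 0 < x) → (∀ x ∈ b, 0 < x) →
      SeqNormalized a → SeqNormalized b → SeqNormalized (seqMul a b)) ∧
    (∀ a : List ℕ, SeqNormalized (seqNormalize a)) ∧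
    (∀ a : List ℕ, SeqNormalized a → seqNormalize a = a) ∧
    (∀ a b : List ℕ, (∀ x ∈ a, 0 < x) → (∀ x ∈ b, 0 < x) →
      seqNormalize (seqMul a b) = seqMul (seqNormalize a) (seqNormalize b)) := by
  refine ⟨?_, ?_, ?_, ?_, ?_, ?_, ?_⟩
  · intro a b c
    match c with
    | [] => rfl
    | p :: cs =>
      match b with
      | [] => rfl
      | m :: bs => simp [seqMul, List.map_map, Function.comp, mul_assoc]
  · intro a; rfl
  · intro a
    match a with
    | [] => rfl
    | m :: bs => simp [seqMul]
  · intro a b _ _ ha hb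
    match b with
    | [] => exact ha
    | m :: bs =>
      have ha' : List.Chain' (fun x y => y ∣ x) a := ha
      unfold SeqNormalized seqMul
      show List.IsChain (fun x y => y ∣ x) (List.map (m * ·) a ++ m :: bs)
      rw [List.isChain_append]
      refine ⟨List.isChain_map_of_isChain (R := fun x y => y ∣ x) (S := fun x y => y ∣ x) (m * ·) (fun a b h => mul_dvd_mul_left m h) ha', hb, ?_⟩
      intro x hx y hy
      simp only [List.head?_cons, Option.mem_def, Option.some.injEq] at hy
      subst hy
      rw [List.getLast?_map] at hx
      simp only [Option.mem_def, Option.map_eq_some_iff] at hx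
      obtain ⟨z, _, rfl⟩ := hx
      exact dvd_mul_right m z
  · intro a
    match a with
    | [] => exact List.isChain_nil
    | x :: xs => exact seqNormalizeAux_chain x xs
  · intro a ha
    match a with
    | [] => rfl
    | x :: xs =>
      have ha' : List.Chain (fun x y => y ∣ x) x xs := ha
      show x :: seqNormalizeAux x xs = x :: xs
      rw [seqNormalizeAux_id x xs ha']
  · intro a b _ _
    match b with
    | [] => rfl
    | m :: bs =>
      match a with
      | [] => simp [seqMul, seqNormalize]
      | x :: xs =>
        show seqNormalize ((m*x) :: (xs.map (m * ·) ++ m :: bs)) = _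
        simp only [seqNormalize, seqMul, seqNormalizeAux_hom, List.map_cons, List.cons_append]
end

section
/- Let $V$ be a finite-dimensional vector space over a field, $f_1,\dots,f_m$ linear endomorphisms of $V$, and $\alpha : V^{\otimes m} \to V^{\otimes m}$ the cyclic shift $v_1\otimes\cdots\otimes v_m \mapsto v_2\otimes\cdots\otimes v_m\otimes v_1$. If $k$ is relatively prime to $m$ and $\sigma := P(m,k)$ is the permutation of $\{1,\dots,m\}$ with $\sigma(1+j) = 1+kj$ (indices mod $m$), then $\mathrm{tr}_{V^{\otimes m}}(\alpha^k \circ (f_1\otimes f_2\otimes\cdots\otimes f_m)) = \mathrm{tr}_V(f_{\sigma(1)} \circ f_{\sigma(2)} \circ \cdots \circ f_{\sigma(m)})$. -/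
open PiTensorProduct
open scoped TensorProduct

/-- The cyclic shift `α : V^{⊗m} → V^{⊗m}`, `v₁⊗⋯⊗v_m ↦ v₂⊗⋯⊗v_m⊗v₁`
(position `j` of the image holds `v_{j+1}`). -/
noncomputable def cyclicShift (K : Type*) [Field K] (V : Type*) [AddCommGroup V]
    [Module K V] (m : ℕ) : Module.End K (⨂[K] (_i : Fin m), V) :=
  (PiTensorProduct.reindex K (fun _ : Fin m => V) (finRotate m).symm).toLinearMap

section Aux

variable (K : Type*) [Field K] (V : Type*) [AddCommGroup V] [Module K V]

theorem piTensor_finite_free [FiniteDimensional K V] (m : ℕ) :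
    Module.Finite K (⨂[K] (_i : Fin m), V) ∧ Module.Free K (⨂[K] (_i : Fin m), V) := by
  induction m with
  | zero =>
    have e : (⨂[K] (_i : Fin 0), V) ≃ₗ[K] K := isEmptyEquiv (Fin 0)
    exact ⟨Module.Finite.equiv e.symm, Module.Free.of_equiv e.symm⟩
  | succ n ih =>
    haveI := ih.1; haveI := ih.2
    have e0 : (⨂[K] (_i : Fin 1), V) ≃ₗ[K] V := subsingletonEquiv 0
    haveI : Module.Finite K (⨂[K] (_i : Fin 1), V) := Module.Finite.equiv e0.symm
    haveI : Module.Free K (⨂[K] (_i : Fin 1), V) := Module.Free.of_equiv e0.symm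
    have e : ((⨂[K] (_i : Fin n), V) ⊗[K] (⨂[K] (_i : Fin 1), V)) ≃ₗ[K]
        ⨂[K] (_i : Fin (n + 1)), V :=
      (tmulEquiv K V).trans (reindex K (fun _ => V) finSumFinEquiv)
    exact ⟨Module.Finite.equiv e, Module.Free.of_equiv e⟩

open Fin.NatCast in
theorem rot_pow (n p : ℕ) (j : Fin (n + 1)) :
    (finRotate (n + 1) ^ p) j = j + (p : Fin (n + 1)) := by
  induction p with
  | zero => simp
  | succ p ih =>
    rw [pow_succ', Equiv.Perm.mul_apply, finRotate_succ_apply, ih, Nat.cast_add_one,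
      ← add_assoc]

theorem shift_pow (m p : ℕ) (x : Fin m → V) :
    (cyclicShift K V m ^ p) (tprod K x) = tprod K (fun j => x ((finRotate m ^ p) j)) := by
  induction p generalizing x with
  | zero => simp
  | succ p ih =>
    rw [pow_succ, Module.End.mul_apply]
    have h1 : (cyclicShift K V m) (tprod K x) = tprod K (fun j => x (finRotate m j)) := by
      simp only [cyclicShift, LinearEquiv.coe_coe, reindex_tprod, Equiv.symm_symm]
    rw [h1, ih]
    congr 1
    funext j
    rw [pow_succ', Equiv.Perm.mul_apply]

theorem prod_rankone (n : ℕ) (h : Fin (n + 1) → Module.Dual K V) (u : Fin (n + 1) → V) :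
    (List.ofFn fun j => dualTensorHom K V V (h j ⊗ₜ[K] u j)).prod
      = (∏ j : Fin n, h j.castSucc (u j.succ)) •
          dualTensorHom K V V (h (Fin.last n) ⊗ₜ[K] u 0) := by
  induction n with
  | zero => simp
  | succ n ih =>
    rw [List.ofFn_succ, List.prod_cons, ih (fun j => h j.succ) (fun j => u j.succ)]
    rw [mul_smul_comm, Module.End.mul_eq_comp, comp_dualTensorHom, smul_smul,
      Fin.prod_univ_succ]
    simp [Fin.succ_castSucc, Fin.succ_last, mul_comm, -Fin.castSucc_succ]

theorem trace_prod_rankone [FiniteDimensional K V] (n : ℕ)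
    (h : Fin (n + 1) → Module.Dual K V) (u : Fin (n + 1) → V) :
    LinearMap.trace K V (List.ofFn fun j => dualTensorHom K V V (h j ⊗ₜ[K] u j)).prod
      = ∏ t : Fin (n + 1), h t (u (t + 1)) := by
  rw [prod_rankone, map_smul, LinearMap.trace_eq_contract_apply, contractLeft_apply,
    Fin.prod_univ_castSucc]
  simp [Fin.coeSucc_eq_succ, Fin.last_add_one]

open Fin.NatCast in
theorem sigma_add (m' k : ℕ) (σ : Equiv.Perm (Fin (m' + 1)))
    (hσ : ∀ j : Fin (m' + 1), (σ j : ℕ) = (k * j) % (m' + 1)) (t : Fin (m' + 1)) :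
    σ t + (k : Fin (m' + 1)) = σ (t + 1) := by
  have h1 : ((t + 1 : Fin (m' + 1)) : ℕ) = (t.1 + 1) % (m' + 1) := by
    rw [Fin.val_add, Fin.val_one']
    conv_rhs => rw [Nat.add_mod, Nat.mod_eq_of_lt t.isLt]
  apply Fin.ext
  rw [Fin.val_add, Fin.val_natCast, hσ, hσ, h1]
  conv_lhs => rw [← Nat.add_mod]
  conv_rhs => rw [Nat.mul_mod, Nat.mod_mod_of_dvd _ dvd_rfl, ← Nat.mul_mod]
  rw [mul_add, mul_one]

theorem core_rankone [FiniteDimensional K V] (m' k : ℕ) (σ : Equiv.Perm (Fin (m' + 1)))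
    (hσ : ∀ j : Fin (m' + 1), (σ j : ℕ) = (k * j) % (m' + 1))
    (φ : Fin (m' + 1) → Module.Dual K V) (w : Fin (m' + 1) → V) :
    LinearMap.trace K (⨂[K] (_i : Fin (m' + 1)), V)
        ((cyclicShift K V (m' + 1) ^ k) ∘ₗ
          PiTensorProduct.map (fun j => dualTensorHom K V V (φ j ⊗ₜ[K] w j)))
      = LinearMap.trace K V
          (List.ofFn fun j => dualTensorHom K V V (φ (σ j) ⊗ₜ[K] w (σ j))).prod := by
  haveI := (piTensor_finite_free K V (m' + 1)).1
  haveI := (piTensor_finite_free K V (m' + 1)).2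
  set Φ : Module.Dual K (⨂[K] (_i : Fin (m' + 1)), V) :=
    PiTensorProduct.lift ((MultilinearMap.mkPiAlgebra K (Fin (m' + 1)) K).compLinearMap φ)
    with hΦ
  have hmap : (cyclicShift K V (m' + 1) ^ k) ∘ₗ
      PiTensorProduct.map (fun j => dualTensorHom K V V (φ j ⊗ₜ[K] w j))
      = dualTensorHom K _ _ (Φ ⊗ₜ[K] tprod K (fun j => w ((finRotate (m' + 1) ^ k) j))) := by
    ext x
    simp only [LinearMap.compMultilinearMap_apply, LinearMap.comp_apply, map_tprod,
      dualTensorHom_apply, hΦ, PiTensorProduct.lift.tprod,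
      MultilinearMap.compLinearMap_apply, MultilinearMap.mkPiAlgebra_apply]
    rw [show (tprod K fun j => (φ j) (x j) • w j)
        = (∏ j, φ j (x j)) • tprod K w from MultilinearMap.map_smul_univ _ _ _,
      map_smul, shift_pow]
  rw [hmap, LinearMap.trace_eq_contract_apply, contractLeft_apply, hΦ,
    PiTensorProduct.lift.tprod]
  rw [trace_prod_rankone]
  rw [MultilinearMap.compLinearMap_apply, MultilinearMap.mkPiAlgebra_apply]
  rw [← Equiv.prod_comp σ (fun j => φ j (w ((finRotate (m' + 1) ^ k) j)))]
  apply Finset.prod_congr rfl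
  intro t _
  rw [rot_pow, sigma_add m' k σ hσ t]

end Aux

/-- If `k` is coprime to `m` and `σ = P(m,k)` is the permutation of `{0,…,m-1}` with
`σ(j) = k·j mod m` (the `0`-indexed form of `σ(1+j) = 1+kj`), then
`tr_{V^{⊗m}}(αᵏ ∘ (f₁ ⊗ ⋯ ⊗ f_m)) = tr_V(f_{σ(1)} ∘ f_{σ(2)} ∘ ⋯ ∘ f_{σ(m)})`. -/
theorem trace_cyclicShift_pow_comp_map
    (K : Type*) [Field K] (V : Type*) [AddCommGroup V] [Module K V]
    [FiniteDimensional K V] (m k : ℕ) (hm : 0 < m) (hk : Nat.Coprime k m)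
    (f : Fin m → Module.End K V)
    (σ : Equiv.Perm (Fin m)) (hσ : ∀ j : Fin m, (σ j : ℕ) = (k * j) % m) :
    LinearMap.trace K (⨂[K] (_i : Fin m), V)
        ((cyclicShift K V m ^ k) ∘ₗ PiTensorProduct.map f)
      = LinearMap.trace K V (List.ofFn fun j => f (σ j)).prod := by
  obtain ⟨m', rfl⟩ : ∃ m', m = m' + 1 := ⟨m - 1, by omega⟩
  set b := Module.finBasis K V with hb
  let eB : Module.Basis (Fin (Module.finrank K V) × Fin (Module.finrank K V)) K (Module.End K V) :=
    (Module.Basis.tensorProduct b.dualBasis b).map (dualTensorHomEquiv K V V)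
  have heB : ∀ p : Fin (Module.finrank K V) × Fin (Module.finrank K V),
      eB p = dualTensorHom K V V (b.dualBasis p.1 ⊗ₜ[K] b p.2) := by
    intro p
    simp only [eB, Module.Basis.map_apply, Module.Basis.tensorProduct_apply', dualTensorHomEquiv,
      dualTensorHomEquivOfBasis_apply, LinearEquiv.ofBijective_apply]
  let Lm : MultilinearMap K (fun _ : Fin (m' + 1) => Module.End K V) K :=
    ((LinearMap.trace K (⨂[K] (_i : Fin (m' + 1)), V)) ∘ₗ
        (LinearMap.llcomp K _ _ _ (cyclicShift K V (m' + 1) ^ k))).compMultilinearMap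
      (PiTensorProduct.mapMultilinear K (fun _ : Fin (m' + 1) => V) (fun _ => V))
  let Rm : MultilinearMap K (fun _ : Fin (m' + 1) => Module.End K V) K :=
    (LinearMap.trace K V).compMultilinearMap
      ((MultilinearMap.mkPiAlgebraFin K (m' + 1) (Module.End K V)).domDomCongr σ)
  have hL : ∀ g : Fin (m' + 1) → Module.End K V,
      Lm g = LinearMap.trace K (⨂[K] (_i : Fin (m' + 1)), V)
        ((cyclicShift K V (m' + 1) ^ k) ∘ₗ PiTensorProduct.map g) := by
    intro g
    simp only [Lm, LinearMap.compMultilinearMap_apply, PiTensorProduct.mapMultilinear_apply,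
      LinearMap.comp_apply, LinearMap.llcomp_apply]
    rfl
  have hR : ∀ g : Fin (m' + 1) → Module.End K V,
      Rm g = LinearMap.trace K V (List.ofFn fun j => g (σ j)).prod := by
    intro g
    simp only [Rm, LinearMap.compMultilinearMap_apply, MultilinearMap.domDomCongr_apply,
      MultilinearMap.mkPiAlgebraFin_apply]
  have key : Lm = Rm := by
    apply Module.Basis.ext_multilinear (fun _ => eB)
    intro v
    rw [hL, hR]
    simp only [heB]
    exact core_rankone K V m' k σ hσ (fun j => b.dualBasis (v j).1) (fun j => b (v j).2)
  rw [← hL, ← hR, key]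
end

section
/- Let $p$ be a prime, $V$ a finite-dimensional vector space over an algebraically closed field of characteristic zero, and $f : V \to V$ an endomorphism with $f^p = \mathrm{id}$. If $\mathrm{tr}(f)$ is a (rational) integer, then $\mathrm{tr}(f) \equiv \dim(V) \pmod p$. -/
open Polynomial

/-- A root of the characteristic polynomial of an endomorphism of a finite-dimensional
vector space is an eigenvalue. -/
lemma hasEigenvalue_of_isRoot_charpoly
    {K V : Type*} [Field K] [AddCommGroup V] [Module K V] [FiniteDimensional K V]
    (f : Module.End K V) {μ : K} (h : f.charpoly.IsRoot μ) : f.HasEigenvalue μ := by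
  classical
  let b := Module.finBasis K V
  let A := LinearMap.toMatrix b b f
  have hA : A.charpoly = f.charpoly := LinearMap.charpoly_toMatrix f b
  -- charpoly.eval μ = det (scalar μ - A)
  have hdet : A.charpoly.eval μ = (Matrix.scalar _ μ - A).det := by
    rw [Matrix.charpoly, eval_det, Matrix.matPolyEquiv_charmatrix]
    simp
  have hdet0 : (Matrix.scalar _ μ - A).det = 0 := by
    rw [← hdet, hA]; exact h
  have hmem : μ ∈ spectrum K A := by
    rw [spectrum.mem_iff]
    intro hu
    have : IsUnit (Matrix.scalar _ μ - A).det := by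
      have : algebraMap K (Matrix (Fin (Module.finrank K V)) (Fin (Module.finrank K V)) K) μ
          = Matrix.scalar _ μ := rfl
      rw [this] at hu
      exact hu.map (Matrix.detMonoidHom)
    rw [hdet0] at this
    exact this.ne_zero rfl
  have : μ ∈ spectrum K f := by
    rw [← AlgEquiv.spectrum_eq (algEquivMatrix b) f]
    exact hmem
  exact Module.End.hasEigenvalue_iff_mem_spectrum.mpr this

/-- If `f` is an endomorphism of a finite-dimensional vector space over an algebraically
closed field of characteristic zero with `f ^ p = 1` for a prime `p`, and the trace of `f`
is a rational integer `t`, then `t ≡ dim V (mod p)`. -/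
theorem trace_congr_dim_mod_prime
    (p : ℕ) (hp : p.Prime)
    (K V : Type*) [Field K] [IsAlgClosed K] [CharZero K]
    [AddCommGroup V] [Module K V] [FiniteDimensional K V]
    (f : Module.End K V) (hf : f ^ p = 1)
    (t : ℤ) (ht : LinearMap.trace K V f = (t : K)) :
    (p : ℤ) ∣ t - (Module.finrank K V : ℤ) := by
  classical
  haveI : Fact p.Prime := ⟨hp⟩
  haveI : NeZero ((p : K)) := ⟨by exact_mod_cast hp.ne_zero⟩
  set n := Module.finrank K V with hn
  let b := Module.finBasis K V
  let A := LinearMap.toMatrix b b f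
  have hA : A.charpoly = f.charpoly := LinearMap.charpoly_toMatrix f b
  -- trace is sum of roots of charpoly
  have htr : LinearMap.trace K V f = f.charpoly.roots.sum := by
    rw [LinearMap.trace_eq_matrix_trace K b, ← hA]
    exact Matrix.trace_eq_sum_roots_charpoly (A := A)
  -- card of roots
  have hcard : f.charpoly.roots.card = n := by
    rw [(Polynomial.splits_iff_card_roots (f := f.charpoly)).mp (IsAlgClosed.splits (k := K) f.charpoly)]
    exact f.charpoly_natDegree
  -- each root is a p-th root of unity
  have hroot : ∀ μ ∈ f.charpoly.roots, μ ^ p = 1 := by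
    intro μ hμ
    have hev : f.HasEigenvalue μ :=
      hasEigenvalue_of_isRoot_charpoly f (Polynomial.isRoot_of_mem_roots hμ)
    obtain ⟨v, hv⟩ := hev.exists_hasEigenvector
    have hpow := hv.pow_apply p
    rw [hf] at hpow
    have : (μ ^ p) • v = (1 : K) • v := by
      simpa using hpow.symm
    have := smul_left_injective K hv.2 this
    simpa using this
  -- primitive p-th root of unity
  obtain ⟨ζ, hζ⟩ := HasEnoughRootsOfUnity.exists_primitiveRoot K p
  -- exponent function
  let e : K → ℕ := fun μ => if h : ∃ j, ζ ^ j = μ then Nat.find h else 0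
  have he : ∀ μ ∈ f.charpoly.roots, ζ ^ (e μ) = μ := by
    intro μ hμ
    obtain ⟨j, _, hj⟩ := hζ.eq_pow_of_pow_eq_one (hroot μ hμ)
    have hex : ∃ j, ζ ^ j = μ := ⟨j, hj⟩
    simp only [e, dif_pos hex]
    exact Nat.find_spec hex
  -- the integer polynomial
  set Q : ℤ[X] := (f.charpoly.roots.map (fun μ => (X : ℤ[X]) ^ e μ)).sum - C t with hQ
  have haevalQ : aeval ζ Q = 0 := by
    rw [hQ, map_sub, map_multiset_sum, Multiset.map_map]
    have : (f.charpoly.roots.map ((aeval ζ) ∘ fun μ => (X : ℤ[X]) ^ e μ)).sum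
        = f.charpoly.roots.sum := by
      apply congrArg Multiset.sum
      conv_rhs => rw [← Multiset.map_id ((LinearMap.charpoly f).roots)]
      refine Multiset.map_congr rfl ?_
      intro μ hμ
      simp [he μ hμ]
    rw [this, ← htr, ht]
    simp
  -- cyclotomic divides Q
  have hint : IsIntegral ℤ ζ := hζ.isIntegral hp.pos
  have hdvd : cyclotomic p ℤ ∣ Q := by
    rw [cyclotomic_eq_minpoly hζ hp.pos]
    exact minpoly.isIntegrallyClosed_dvd hint haevalQ
  -- evaluate at 1
  have heval : Q.eval 1 = (n : ℤ) - t := by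
    rw [hQ]
    rw [eval_sub, eval_C]
    congr 1
    have h1 := map_multiset_sum (Polynomial.evalRingHom (1 : ℤ))
      (f.charpoly.roots.map (fun μ => (X : ℤ[X]) ^ e μ))
    simp only [coe_evalRingHom] at h1
    rw [h1, Multiset.map_map]
    have : (f.charpoly.roots.map ((fun q : ℤ[X] => q.eval 1) ∘ fun μ => (X : ℤ[X]) ^ e μ))
        = f.charpoly.roots.map (fun _ => (1 : ℤ)) := by
      refine Multiset.map_congr rfl ?_
      intro μ _
      simp
    rw [this, Multiset.map_const', hcard]
    simp
  have hpn : (p : ℤ) ∣ (n : ℤ) - t := by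
    have h2 : (cyclotomic p ℤ).eval 1 ∣ Q.eval 1 := Polynomial.eval_dvd hdvd
    rwa [eval_one_cyclotomic_prime, heval] at h2
  exact dvd_sub_comm.mp hpn
end

section
/- Let $F$ act on a finite group $G$ by group automorphisms, with $F$ a finite group. For coprime natural numbers $m, k$, an element $g \in G$, and $y \in F$, define $G_{m,k}(g,y) = \{x \in F \mid x^m = y \text{ and } \prod_{j=0}^{m-1} x^{-\langle j/k\rangle}.g = 1\}$, where $\langle j/k \rangle \in \{0,\dots,m-1\}$ is $jl \bmod m$ for $l$ with $kl \equiv 1 \pmod m$. Then for all $x \in F$: $|G_{m,k}(x.g, y)| = |G_{m,k}(g, x^{-1}yx)|$ (conjugation equivariance). -/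
/-- For a group `F` acting by automorphisms on a group `G`, coprime `m, k` and `l` an
inverse of `k` modulo `m`, the set
`G_{m,k}(g,y) = {x ∈ F ∣ xᵐ = y and ∏_{j=0}^{m-1} x^{-⟨j/k⟩}.g = 1}`,
where `⟨j/k⟩ = (j·l) % m` and the product is taken in order `j = 0,…,m-1`. -/
def GmkSet {F G : Type*} [Group F] [Group G] [MulDistribMulAction F G]
    (m l : ℕ) (g : G) (y : F) : Set F :=
  {x | x ^ m = y ∧
    ((List.range m).map fun j => (x⁻¹ ^ ((j * l) % m)) • g).prod = 1}

/-- `z_{m,k}(g,y)`, the cardinality of `G_{m,k}(g,y)`. -/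
noncomputable def zmk {F G : Type*} [Group F] [Group G] [MulDistribMulAction F G]
    (m l : ℕ) (g : G) (y : F) : ℕ :=
  (GmkSet (F := F) (G := G) m l g y).ncard

private lemma smul_prod_map {F G : Type*} [Group F] [Group G] [MulDistribMulAction F G]
    (c : F) (L : List G) : (L.map fun a => c • a).prod = c • L.prod := by
  exact (map_list_prod (MulDistribMulAction.toMonoidHom G c) L).symm

private lemma gmk_mem_iff {F G : Type*} [Group F] [Group G] [MulDistribMulAction F G]
    (m l : ℕ) (g : G) (y x x' : F) :
    x' ∈ GmkSet m l (x • g) y ↔ (x⁻¹ * x' * x) ∈ GmkSet m l g (x⁻¹ * y * x) := by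
  have hconj : ∀ (a : F) (n : ℕ), (x⁻¹ * a * x) ^ n = x⁻¹ * a ^ n * x := by
    intro a n
    rw [show x⁻¹ * a * x = x⁻¹ * a * (x⁻¹)⁻¹ by rw [inv_inv], conj_pow, inv_inv]
  have hlist : ((List.range m).map fun j => ((x⁻¹ * x' * x)⁻¹ ^ ((j * l) % m)) • g)
      = ((List.range m).map fun j => (x'⁻¹ ^ ((j * l) % m)) • (x • g)).map
          fun a => x⁻¹ • a := by
    rw [List.map_map]
    apply List.map_congr_left
    intro j _
    simp only [Function.comp]
    rw [show (x⁻¹ * x' * x)⁻¹ = x⁻¹ * x'⁻¹ * x by group, hconj, mul_smul, mul_smul]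
  have hprod : (((List.range m).map fun j =>
      ((x⁻¹ * x' * x)⁻¹ ^ ((j * l) % m)) • g).prod = 1)
      ↔ ((List.range m).map fun j => (x'⁻¹ ^ ((j * l) % m)) • (x • g)).prod = 1 := by
    rw [hlist, smul_prod_map]
    constructor
    · intro h
      have := congrArg (fun z => x • z) h
      simpa using this
    · intro h
      rw [h, smul_one]
  have hpow : ((x⁻¹ * x' * x) ^ m = x⁻¹ * y * x) ↔ x' ^ m = y := by
    rw [hconj]
    constructor
    · intro h; exact mul_left_cancel (mul_right_cancel h)
    · intro h; rw [h]
  simp only [GmkSet, Set.mem_setOf_eq, hprod, hpow]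

/-- Conjugation equivariance: `z_{m,k}(x.g, y) = z_{m,k}(g, x⁻¹yx)`. -/
theorem zmk_conj_equivariant
    {F G : Type*} [Group F] [Group G] [Finite F] [Finite G]
    [MulDistribMulAction F G]
    (m k l : ℕ) (hm : 0 < m) (hk : Nat.Coprime m k)
    (hl : k * l ≡ 1 [MOD m])
    (g : G) (y x : F) :
    zmk m l (x • g) y = zmk (F := F) m l g (x⁻¹ * y * x) := by
  have himg : GmkSet (F := F) m l g (x⁻¹ * y * x)
      = (fun a => x⁻¹ * a * x) '' GmkSet m l (x • g) y := by
    ext b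
    simp only [Set.mem_image]
    constructor
    · intro hb
      refine ⟨x * b * x⁻¹, ?_, by group⟩
      rw [gmk_mem_iff m l g y x]
      convert hb using 2 <;> group
    · rintro ⟨a, ha, rfl⟩
      exact (gmk_mem_iff m l g y x a).mp ha
  rw [zmk, zmk, himg, Set.ncard_image_of_injective]
  intro a b hab
  simpa using hab
end

section
/- Let $F$ be a finite group acting by automorphisms on a finite group $G$, and let $m, k, q$ be pairwise coprime natural numbers with $k$ also coprime to $|F|$ and $|G|$. Then $G_{mk,q}(g, y^k) = G_{m,q}(g,y)$ as subsets of $F$, and in particular $z_{mk,q}(g,y^k) = z_{m,q}(g,y)$. -/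
theorem Nat.ModEq.mul_right_iff_of_mul_modEq_one {m r s a b : ℕ} (hsr : s * r ≡ 1 [MOD m]) :
    a * r ≡ b [MOD m] ↔ a ≡ b * s [MOD m] := by
  simp only [← ZMod.natCast_eq_natCast_iff, Nat.cast_mul, Nat.cast_one] at hsr ⊢
  constructor <;> intro h
  · linear_combination s * h - (a : ZMod m) * hsr
  · linear_combination (r : ZMod m) * h + (b : ZMod m) * hsr

theorem Nat.add_mul_mod_of_mul_modEq_one {m r s : ℕ} (hsr : s * r ≡ 1 [MOD m]) (j : ℕ) :
    (j + s) * r % m = (j * r % m + 1) % m := by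
  change (j + s) * r ≡ j * r % m + 1 [MOD m]
  simp only [← ZMod.natCast_eq_natCast_iff, Nat.cast_mul, Nat.cast_add, Nat.cast_one,
    ZMod.natCast_mod] at hsr ⊢
  linear_combination hsr

theorem List.eq_of_prod_map_range_eq {M : Type*} [CancelMonoid M] {f₁ f₂ : ℕ → M} {m t : ℕ}
    (ht : t < m) (h : ∀ j < m, j ≠ t → f₁ j = f₂ j)
    (hprod : ((List.range m).map f₁).prod = ((List.range m).map f₂).prod) : f₁ t = f₂ t := by
  obtain ⟨u, rfl⟩ : ∃ u, m = t + 1 + u := ⟨m - (t + 1), by omega⟩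
  have hpre : (List.range t).map f₁ = (List.range t).map f₂ :=
    List.map_congr_left fun j hj => have := List.mem_range.mp hj; h j (by omega) (by omega)
  have hsuf : (List.range u).map (fun j => f₁ (t + 1 + j)) =
      (List.range u).map (fun j => f₂ (t + 1 + j)) :=
    List.map_congr_left fun j hj => have := List.mem_range.mp hj; h _ (by omega) (by omega)
  simp only [List.range_add, List.range_succ, List.map_append, List.map_map, List.prod_append,
    List.map_singleton, List.prod_singleton, Function.comp_def, hpre, hsuf] at hprod
  exact mul_left_cancel (mul_right_cancel hprod)

theorem List.prod_map_range_mul_of_periodic {M : Type*} [Monoid M] {f : ℕ → M} {m : ℕ}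
    (hf : Function.Periodic f m) (k : ℕ) :
    ((List.range (m * k)).map f).prod = ((List.range m).map f).prod ^ k := by
  induction k with
  | zero => simp
  | succ n ih =>
    rw [Nat.mul_succ, List.range_add, List.map_append, List.prod_append, ih, List.map_map,
      pow_succ]
    congr 3
    funext j
    simpa [add_comm, mul_comm] using hf.nat_mul n j

theorem List.rotate_map_range_of_periodic {α : Type*} {c : ℕ → α} {m : ℕ}
    (hc : Function.Periodic c m) (s : ℕ) :
    ((List.range m).map c).rotate s = (List.range m).map fun j => c (j + s) := by
  refine List.ext_getElem (by simp) fun i _ _ => ?_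
  simp [List.getElem_rotate, hc.map_mod_nat]

section

variable {F G : Type*} [Group F]

theorem smul_eq_of_pow_smul_eq [MulAction F G] [Finite F] {k : ℕ} (hk : k.Coprime (Nat.card F))
    {w : F} {g : G} (h : w ^ k • g = g) : w • g = g :=
  Subgroup.zpowers_le.mpr (MulAction.mem_stabilizer_iff.mpr h) <|
    mem_zpowers_pow_iff.mpr (hk.coprime_dvd_right (orderOf_dvd_natCard w))

theorem pow_mod_smul_eq [MulAction F G] {m : ℕ} {w : F} {g : G} (h : w ^ m • g = g) (i : ℕ) :
    w ^ (i % m) • g = w ^ i • g := by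
  have hfix : (w ^ m) ^ (i / m) • g = g :=
    (MulAction.stabilizer F g).pow_mem (MulAction.mem_stabilizer_iff.mpr h) _
  conv_rhs => rw [← Nat.mod_add_div i m, pow_add, pow_mul, mul_smul, hfix]

def twistedProd [Monoid G] [MulAction F G] (m r : ℕ) (w : F) (g : G) : G :=
  ((List.range m).map fun j => w ^ (j * r % m) • g).prod

theorem mem_GmkSet_iff [Group G] [MulDistribMulAction F G] {m l : ℕ} {g : G} {y x : F} :
    x ∈ GmkSet m l g y ↔ x ^ m = y ∧ twistedProd m l x⁻¹ g = 1 :=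
  Iff.rfl

theorem twistedProd_mul_eq_pow [Monoid G] [MulAction F G] {m : ℕ} {w : F} {g : G}
    (h : w ^ m • g = g) (k r : ℕ) :
    twistedProd (m * k) r w g = twistedProd m r w g ^ k := by
  have hmod : ∀ j, w ^ (j * r % (m * k)) • g = w ^ (j * r % m) • g := fun j => by
    rw [← pow_mod_smul_eq h, Nat.mod_mod_of_dvd _ (dvd_mul_right m k), pow_mod_smul_eq h]
  simp only [twistedProd, hmod]
  refine List.prod_map_range_mul_of_periodic (fun j => ?_) k
  simp only [add_mul, Nat.add_mul_mod_self_left]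

theorem pow_smul_eq_of_twistedProd_eq_one [Group G] [MulDistribMulAction F G] {m r s : ℕ}
    {w : F} {g : G} (hsr : s * r ≡ 1 [MOD m]) (h : twistedProd m r w g = 1) :
    w ^ m • g = g := by
  rcases Nat.eq_zero_or_pos m with rfl | hm
  · simp
  set c : ℕ → G := fun j => w ^ (j * r % m) • g with hc
  have hper : Function.Periodic c m := fun j => by
    simp only [hc, add_mul, Nat.add_mul_mod_self_left]
  have hact : ((List.range m).map fun j => w • c j).prod = 1 := by
    rw [show (fun j => w • c j) = (w • ·) ∘ c from rfl, ← List.map_map, ← List.smul_prod']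
    exact (congrArg (w • ·) h).trans (smul_one w)
  have hrot : ((List.range m).map fun j => c (j + s)).prod = 1 := by
    rw [← List.rotate_map_range_of_periodic hper]
    exact List.prod_rotate_eq_one_of_prod_eq_one h s
  have hsucc : ∀ j, c (j + s) = w ^ ((j * r % m + 1) % m) • g := fun j => by
    simp only [hc, Nat.add_mul_mod_of_mul_modEq_one hsr]
  have hwc : ∀ j, w • c j = w ^ (j * r % m + 1) • g := fun j => by
    simp only [hc, smul_smul, pow_succ']
  set t := (m - 1) * s % m
  have hlast : ∀ j < m, j * r % m = m - 1 ↔ j = t := fun j hj => by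
    rw [← Nat.mod_eq_of_lt (Nat.sub_lt hm one_pos)]
    exact (Nat.ModEq.mul_right_iff_of_mul_modEq_one hsr).trans
      (by rw [Nat.ModEq, Nat.mod_eq_of_lt hj])
  have ht : t < m := Nat.mod_lt _ hm
  have hagree : ∀ j < m, j ≠ t → w • c j = c (j + s) := fun j hj hjt => by
    have : j * r % m + 1 < m := by
      have := Nat.mod_lt (j * r) hm
      have := (hlast j hj).not.mpr hjt
      omega
    rw [hwc, hsucc, Nat.mod_eq_of_lt this]
  have key := List.eq_of_prod_map_range_eq ht hagree (hact.trans hrot.symm)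
  rwa [hwc, hsucc, (hlast t ht).mpr rfl, Nat.sub_add_cancel hm, Nat.mod_self, pow_zero,
    one_smul] at key

end

theorem GmkSet_mul_pow_general
    {F G : Type*} [Group F] [Group G] [Fintype F] [Fintype G]
    [MulDistribMulAction F G]
    (m k q r : ℕ)
    (hkF : Nat.Coprime k (Fintype.card F)) (hkG : Nat.Coprime k (Fintype.card G))
    (hr : q * r ≡ 1 [MOD m * k])
    (g : G) (y : F) :
    GmkSet (F := F) (G := G) (m * k) r g (y ^ k) = GmkSet m r g y := by
  rw [← Nat.card_eq_fintype_card] at hkF hkG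
  have hpowF := (Nat.Coprime.pow_left_bijective (G := F) hkF.symm).injective
  have hpowG := (Nat.Coprime.pow_left_bijective (G := G) hkG.symm).injective
  ext x
  rw [mem_GmkSet_iff, mem_GmkSet_iff]
  constructor
  · rintro ⟨hxy, hP⟩
    have hfix : x⁻¹ ^ m • g = g := smul_eq_of_pow_smul_eq hkF <| by
      rw [← pow_mul]
      exact pow_smul_eq_of_twistedProd_eq_one hr hP
    refine ⟨hpowF ?_, hpowG ?_⟩
    · simpa only [← pow_mul] using hxy
    · simp only [← twistedProd_mul_eq_pow hfix, hP, one_pow]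
  · rintro ⟨hxy, hQ⟩
    have hfix := pow_smul_eq_of_twistedProd_eq_one (hr.of_mul_right k) hQ
    exact ⟨by rw [pow_mul, hxy], by rw [twistedProd_mul_eq_pow hfix, hQ, one_pow]⟩

/-- If `m`, `k`, `q` are pairwise coprime and `k` is moreover coprime to `|F|` and `|G|`,
then `G_{mk,q}(g, yᵏ) = G_{m,q}(g, y)`; in particular `z_{mk,q}(g,yᵏ) = z_{m,q}(g,y)`.
Here `r` is a common inverse of `q` modulo `mk` (hence also modulo `m`). -/
theorem GmkSet_mul_pow
    {F G : Type*} [Group F] [Group G] [Fintype F] [Fintype G]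
    [MulDistribMulAction F G]
    (m k q r : ℕ) (hm : 0 < m) (hk : 0 < k) (hq : 0 < q)
    (hmk : Nat.Coprime m k) (hmq : Nat.Coprime m q) (hkq : Nat.Coprime k q)
    (hkF : Nat.Coprime k (Fintype.card F)) (hkG : Nat.Coprime k (Fintype.card G))
    (hr : q * r ≡ 1 [MOD m * k])
    (g : G) (y : F) :
    GmkSet (F := F) (G := G) (m * k) r g (y ^ k) = GmkSet m r g y :=
  GmkSet_mul_pow_general m k q r hkF hkG hr g y
end

section
/- Let $F$ be a finite group acting by automorphisms on a finite group $G$, and let $m$ and $k$ be coprime natural numbers. Then for all $y \in F$ and $g \in G$: $z_{m,k}(1,y) = z_{m,1}(1,y)$ and $z_{m,k}(g,1) = z_{m,1}(g,1)$. In the second case, if $l$ satisfies $kl \equiv 1 \pmod m$, the maps $x \mapsto x^k$ and $x \mapsto x^l$ are mutually inverse bijections between $G_{m,1}(g,1)$ and $G_{m,k}(g,1)$. -/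
/-! For `g = 1` every factor of the product is `1`, so `G_{m,k}(1,y) = {x ∣ xᵐ = y}`.
For `y = 1` exponents of `x` only matter modulo `m`, so `(xᵃ)^{-⟨j l'⟩} = x^{-⟨j l⟩}` termwise
whenever `a l' ≡ l (mod m)`. Hence `x ↦ xᵏ` maps `G_{m,1}(g,1)` to `G_{m,k}(g,1)`, `x ↦ xˡ` maps
back, and `k l ≡ 1` makes them mutually inverse. -/

section

variable {F G : Type*} [Group F] [Group G] [MulDistribMulAction F G]

theorem GmkSet_one_left (m l : ℕ) (y : F) :
    GmkSet (G := G) m l 1 y = {x | x ^ m = y} := by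
  ext x
  simp [GmkSet]

theorem pow_pow_eq_self_of_modEq {x : F} {m a b : ℕ} (hx : x ^ m = 1) (hab : a * b ≡ 1 [MOD m]) :
    (x ^ a) ^ b = x := by
  rw [← pow_mul, pow_eq_pow_of_modEq hab hx, pow_one]

theorem pow_mem_GmkSet {m l l' a : ℕ} (hal : a * l' ≡ l [MOD m]) {g : G} {x : F}
    (hx : x ∈ GmkSet m l g 1) : x ^ a ∈ GmkSet m l' g 1 := by
  obtain ⟨hxm, hprod⟩ := hx
  refine ⟨by rw [pow_right_comm, hxm, one_pow], ?_⟩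
  have hx_inv : x⁻¹ ^ m = 1 := by rw [inv_pow, hxm, inv_one]
  have hfactor : ∀ j ∈ List.range m,
      ((x ^ a)⁻¹ ^ (j * l' % m)) • g = (x⁻¹ ^ (j * l % m)) • g := by
    intro j _
    rw [← inv_pow, ← pow_mul]
    congr 1
    refine pow_eq_pow_of_modEq ?_ hx_inv
    calc a * (j * l' % m) ≡ a * (j * l') [MOD m] := (Nat.mod_modEq _ m).mul_left a
      _ = a * l' * j := by ring
      _ ≡ l * j [MOD m] := hal.mul_right j
      _ = j * l := by ring
      _ ≡ j * l % m [MOD m] := (Nat.mod_modEq _ m).symm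
  rwa [List.map_congr_left hfactor]

theorem invOn_pow_GmkSet {m k l : ℕ} (hkl : k * l ≡ 1 [MOD m]) (g : G) :
    Set.InvOn (fun x : F => x ^ l) (fun x : F => x ^ k) (GmkSet m 1 g 1) (GmkSet m l g 1) :=
  ⟨fun _ hx => pow_pow_eq_self_of_modEq hx.1 hkl,
    fun _ hx => pow_pow_eq_self_of_modEq hx.1 (mul_comm k l ▸ hkl)⟩

theorem mapsTo_pow_GmkSet {m k l : ℕ} (hkl : k * l ≡ 1 [MOD m]) (g : G) :
    Set.MapsTo (fun x : F => x ^ k) (GmkSet m 1 g 1) (GmkSet m l g 1) :=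
  fun _ => pow_mem_GmkSet hkl

theorem mapsTo_pow_GmkSet_symm (m l : ℕ) (g : G) :
    Set.MapsTo (fun x : F => x ^ l) (GmkSet m l g 1) (GmkSet m 1 g 1) :=
  fun _ => pow_mem_GmkSet (by rw [mul_one])

theorem bijOn_pow_GmkSet {m k l : ℕ} (hkl : k * l ≡ 1 [MOD m]) (g : G) :
    Set.BijOn (fun x : F => x ^ k) (GmkSet m 1 g 1) (GmkSet m l g 1) :=
  (invOn_pow_GmkSet hkl g).bijOn (mapsTo_pow_GmkSet hkl g) (mapsTo_pow_GmkSet_symm m l g)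

theorem bijOn_pow_GmkSet_symm {m k l : ℕ} (hkl : k * l ≡ 1 [MOD m]) (g : G) :
    Set.BijOn (fun x : F => x ^ l) (GmkSet m l g 1) (GmkSet m 1 g 1) :=
  (invOn_pow_GmkSet hkl g).symm.bijOn (mapsTo_pow_GmkSet_symm m l g) (mapsTo_pow_GmkSet hkl g)

end

theorem zmk_one_cases_general
    {F G : Type*} [Group F] [Group G]
    [MulDistribMulAction F G]
    (m k l : ℕ)
    (hl : k * l ≡ 1 [MOD m]) (g : G) (y : F) :
    (GmkSet (F := F) (G := G) m l (1 : G) y).ncard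
        = (GmkSet (F := F) (G := G) m 1 (1 : G) y).ncard ∧
    (GmkSet (F := F) (G := G) m l g (1 : F)).ncard
        = (GmkSet (F := F) (G := G) m 1 g (1 : F)).ncard ∧
    Set.BijOn (fun x : F => x ^ k)
      (GmkSet m 1 g (1 : F)) (GmkSet m l g (1 : F)) ∧
    Set.BijOn (fun x : F => x ^ l)
      (GmkSet m l g (1 : F)) (GmkSet m 1 g (1 : F)) ∧
    (∀ x ∈ GmkSet (F := F) (G := G) m 1 g (1 : F), (x ^ k) ^ l = x) ∧
    (∀ x ∈ GmkSet (F := F) (G := G) m l g (1 : F), (x ^ l) ^ k = x) :=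
  ⟨by rw [GmkSet_one_left, GmkSet_one_left], (bijOn_pow_GmkSet_symm hl g).ncard_eq,
    bijOn_pow_GmkSet hl g, bijOn_pow_GmkSet_symm hl g,
    (invOn_pow_GmkSet hl g).1, (invOn_pow_GmkSet hl g).2⟩

/-- `z_{m,k}(1,y) = z_{m,1}(1,y)` and `z_{m,k}(g,1) = z_{m,1}(g,1)`; in the second case
`x ↦ xᵏ` and `x ↦ xˡ` are mutually inverse bijections between `G_{m,1}(g,1)` and
`G_{m,k}(g,1)`. -/
theorem zmk_one_cases
    {F G : Type*} [Group F] [Group G] [Finite F] [Finite G]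
    [MulDistribMulAction F G]
    (m k l : ℕ) (hm : 0 < m) (hk : Nat.Coprime m k)
    (hl : k * l ≡ 1 [MOD m]) (g : G) (y : F) :
    (GmkSet (F := F) (G := G) m l (1 : G) y).ncard
        = (GmkSet (F := F) (G := G) m 1 (1 : G) y).ncard ∧
    (GmkSet (F := F) (G := G) m l g (1 : F)).ncard
        = (GmkSet (F := F) (G := G) m 1 g (1 : F)).ncard ∧
    Set.BijOn (fun x : F => x ^ k)
      (GmkSet m 1 g (1 : F)) (GmkSet m l g (1 : F)) ∧
    Set.BijOn (fun x : F => x ^ l)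
      (GmkSet m l g (1 : F)) (GmkSet m 1 g (1 : F)) ∧
    (∀ x ∈ GmkSet (F := F) (G := G) m 1 g (1 : F), (x ^ k) ^ l = x) ∧
    (∀ x ∈ GmkSet (F := F) (G := G) m l g (1 : F), (x ^ l) ^ k = x) :=
  zmk_one_cases_general m k l hl g y
end
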